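/- Let X and Y be Δ-generated topological spaces with Y Δ-Hausdorff. Then the space C(X,Y) of continuous maps from X to Y, equipped with the Δ-kelleyfication of the compact-open topology, is Δ-Hausdorff. -/

import Mathlib

/-- A topological space `X` is *Δ-Hausdorff* if the image of every continuous map
`[0,1] → X` is closed in `X`. -/
def DeltaHausdorff (X : Type*) [TopologicalSpace X] : Prop :=
  ∀ f : C(unitInterval, X), IsClosed (Set.range f)

/-!
A path in the Δ-kelleyfied `C(X, Y)` is in particular a path `γ` for the compact-open topology,
and a closed set for the Δ-kelleyfication is one whose preimage under every continuous
`p : ℝⁿ → C(X, Y)` is closed. Now `p ⁻¹' range γ` is the projection of the equaliser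
`{(z, t) | p z = γ t}` along the compact factor `[0,1]`, so it suffices that this equaliser is
closed; pointwise evaluation reduces this to the same statement for maps into `Y`.

There, if `α z ≠ γ t`, pick a closed interval `J` around `t` with `α z ∉ γ '' J` (points are
closed in `Y`). The image `γ '' J` is the image of a reparametrised path, hence closed, so
`α ⁻¹' (γ '' J)ᶜ ×ˢ J` is a neighbourhood of `(z, t)` disjoint from the equaliser.
-/

open TopologicalSpace Topology Set unitInterval

namespace DeltaHausdorff

variable {Y : Type*} [TopologicalSpace Y]

theorem isClosed_singleton (hY : DeltaHausdorff Y) (y : Y) : IsClosed ({y} : Set Y) := by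
  rw [← range_const (ι := I)]
  exact hY (ContinuousMap.const I y)

theorem isClosed_image_Icc (hY : DeltaHausdorff Y) (γ : C(I, Y)) {a b : I} (hab : a ≤ b) :
    IsClosed (γ '' Icc a b) := by
  let reparam : C(I, I) :=
    ⟨fun t ↦ projIcc a b hab t, continuous_subtype_val.comp continuous_projIcc⟩
  have hrange : range reparam = Icc a b := by
    change range (Subtype.val ∘ projIcc a b hab) = _
    rw [range_comp, (projIcc_surjective hab).range_eq, image_univ, Subtype.range_coe]
  simpa [range_comp, hrange] using hY (γ.comp reparam)

theorem isClosed_setOf_eq {Z : Type*} [TopologicalSpace Z] (hY : DeltaHausdorff Y)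
    (α : C(Z, Y)) (γ : C(I, Y)) : IsClosed {q : Z × I | α q.1 = γ q.2} := by
  refine isOpen_compl_iff.1 (isOpen_iff_mem_nhds.2 ?_)
  rintro ⟨z, t⟩ hne
  have hU : γ ⁻¹' {α z}ᶜ ∈ 𝓝 t := γ.continuous.continuousAt.preimage_mem_nhds
    ((hY.isClosed_singleton _).isOpen_compl.mem_nhds (Ne.symm hne))
  obtain ⟨a, b, htJ, hJ, hJU⟩ := exists_Icc_mem_subset_of_mem_nhds hU
  have hz : α ⁻¹' (γ '' Icc a b)ᶜ ∈ 𝓝 z := by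
    refine α.continuous.continuousAt.preimage_mem_nhds
      ((hY.isClosed_image_Icc γ (htJ.1.trans htJ.2)).isOpen_compl.mem_nhds ?_)
    rintro ⟨s, hs, hγs⟩
    exact hJU hs hγs
  filter_upwards [prod_mem_nhds hz hJ] with ⟨z', t'⟩ ⟨hz', ht'⟩ heq
  exact hz' ⟨t', ht', heq.symm⟩

end DeltaHausdorff

theorem ContinuousMap.isClosed_setOf_eq_of_deltaHausdorff {X Y Z : Type*} [TopologicalSpace X]
    [TopologicalSpace Y] [TopologicalSpace Z] (hY : DeltaHausdorff Y) (α : C(Z, C(X, Y)))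
    (γ : C(I, C(X, Y))) : IsClosed {q : Z × I | α q.1 = γ q.2} := by
  have hpointwise : {q : Z × I | α q.1 = γ q.2} = ⋂ x : X, {q : Z × I | α q.1 x = γ q.2 x} := by
    ext q
    simp [ContinuousMap.ext_iff]
  rw [hpointwise]
  exact isClosed_iInter fun x ↦ hY.isClosed_setOf_eq ⟨fun z ↦ α z x, by fun_prop⟩
    ⟨fun t ↦ γ t x, by fun_prop⟩

theorem isClosed_preimage_range_of_isClosed_setOf_eq {Z K T : Type*} [TopologicalSpace Z]
    [TopologicalSpace K] [CompactSpace K] {α : Z → T} {γ : K → T}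
    (h : IsClosed {q : Z × K | α q.1 = γ q.2}) : IsClosed (α ⁻¹' range γ) := by
  have hproj : α ⁻¹' range γ = Prod.fst '' {q : Z × K | α q.1 = γ q.2} := by
    ext z
    simp [eq_comm]
  rw [hproj]
  exact isClosedMap_fst_of_compactSpace _ h

namespace TopologicalSpace

variable {Z : Type*} [t : TopologicalSpace Z]

theorem deltaGenerated_le_self : deltaGenerated Z ≤ t :=
  iSup_le fun p ↦ p.2.continuous.coinduced_le

theorem isClosed_deltaGenerated_iff {s : Set Z} :
    IsClosed[deltaGenerated Z] s ↔ ∀ n (p : C(Fin n → ℝ, Z)), IsClosed (p ⁻¹' s) := by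
  simp only [isClosed_iSup_iff, isClosed_coinduced, Sigma.forall]

end TopologicalSpace

theorem deltaHausdorff_continuousMapSpace_general
    {X Y : Type*} [TopologicalSpace X] [TopologicalSpace Y]
    (hY : DeltaHausdorff Y) :
    @DeltaHausdorff C(X, Y) (TopologicalSpace.deltaGenerated C(X, Y)) := by
  intro γ
  have hγ : Continuous γ :=
    continuous_le_rng deltaGenerated_le_self (@ContinuousMap.continuous _ _ _ (deltaGenerated _) γ)
  refine isClosed_deltaGenerated_iff.2 fun n p ↦ ?_
  exact isClosed_preimage_range_of_isClosed_setOf_eq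
    (ContinuousMap.isClosed_setOf_eq_of_deltaHausdorff hY p ⟨γ, hγ⟩)

/-- If `X` and `Y` are Δ-generated and `Y` is Δ-Hausdorff, then the space of continuous
maps `C(X, Y)`, equipped with the Δ-kelleyfication of the compact-open topology,
is Δ-Hausdorff. -/
theorem deltaHausdorff_continuousMapSpace
    {X Y : Type*} [TopologicalSpace X] [TopologicalSpace Y]
    [DeltaGeneratedSpace X] [DeltaGeneratedSpace Y] (hY : DeltaHausdorff Y) :
    @DeltaHausdorff C(X, Y) (TopologicalSpace.deltaGenerated C(X, Y)) :=
  deltaHausdorff_continuousMapSpace_general hY
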